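/- arXiv:1510.08411 — 3 statements merged into one kernel-verified Lean document; each statement's English description precedes it below -/
import Mathlib

section
/- In a class of structures closed under substructure generated by subsets (admitting intersections), two tuples realize the same Galois type over M iff there is an isomorphism between the generated substructures fixing M and mapping one tuple to the other: if gtp(a1/M; N1) = gtp(a2/M; N2) then there is an isomorphism f : cl^{N1}(a1 ∪ M) → cl^{N2}(a2 ∪ M) with f fixing M pointwise and f(a1) = a2. -/
/-!
The amalgamating embeddings carry both generated substructures onto the substructures of `P`
generated by the image sets, and these image sets coincide because the embeddings agree on `M`
and identify `a1` with `a2`; one embedding followed by the inverse of the other is the required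
isomorphism.
-/

open FirstOrder Language

namespace FirstOrder.Language

variable {L : Language} {N₁ N₂ P : Type*} [L.Structure N₁] [L.Structure N₂] [L.Structure P]

theorem Embedding.exists_equiv_of_map_eq (g : N₁ ↪[L] P) (h : N₂ ↪[L] P)
    {S₁ : L.Substructure N₁} {S₂ : L.Substructure N₂} (hS : S₁.map g.toHom = S₂.map h.toHom) :
    ∃ f : S₁ ≃[L] S₂, ∀ x, h (f x) = g x := by
  obtain ⟨e, he⟩ : ∃ e : S₁.map g.toHom ≃[L] S₂.map h.toHom, ∀ y, (e y : P) = y := by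
    rw [← hS]
    exact ⟨Equiv.refl L _, fun _ => rfl⟩
  refine ⟨(h.substructureEquivMap S₂).symm.comp (e.comp (g.substructureEquivMap S₁)), fun x => ?_⟩
  rw [← Embedding.substructureEquivMap_apply h S₂, Equiv.comp_apply, Equiv.apply_symm_apply,
    Equiv.comp_apply, he, Embedding.substructureEquivMap_apply]

theorem Embedding.exists_equiv_closure_of_image_eq (g : N₁ ↪[L] P) (h : N₂ ↪[L] P)
    {s₁ : Set N₁} {s₂ : Set N₂} (hs : g '' s₁ = h '' s₂) :
    ∃ f : Substructure.closure L s₁ ≃[L] Substructure.closure L s₂, ∀ x, h (f x) = g x :=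
  g.exists_equiv_of_map_eq h <| by
    rw [Substructure.map_closure, Substructure.map_closure]
    exact congrArg _ hs

end FirstOrder.Language

theorem stmt_4_general {L : FirstOrder.Language}
    {M N1 N2 P : Type*} [L.Structure M] [L.Structure N1] [L.Structure N2] [L.Structure P]
    (i1 : M ↪[L] N1) (i2 : M ↪[L] N2) (a1 : N1) (a2 : N2)
    (g : N1 ↪[L] P) (h : N2 ↪[L] P)
    (hcomm : g.comp i1 = h.comp i2) (ha : g a1 = h a2) :
    ∃ f : (↥(Substructure.closure L (Set.range i1 ∪ {a1}))) ≃[L]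
          (↥(Substructure.closure L (Set.range i2 ∪ {a2}))),
      (∀ m : M,
        (f ⟨i1 m, Substructure.subset_closure (Or.inl ⟨m, rfl⟩)⟩ : N2) = i2 m) ∧
      ((f ⟨a1, Substructure.subset_closure (Or.inr rfl)⟩ : N2) = a2) := by
  have hM : ∀ m, g (i1 m) = h (i2 m) := fun m => DFunLike.congr_fun hcomm m
  have hgen : g '' (Set.range i1 ∪ {a1}) = h '' (Set.range i2 ∪ {a2}) := by
    simp only [Set.image_union, Set.image_singleton, ← Set.range_comp, Function.comp_def, hM, ha]
  obtain ⟨f, hf⟩ := g.exists_equiv_closure_of_image_eq h hgen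
  exact ⟨f, fun m => h.injective ((hf _).trans (hM m)), h.injective ((hf _).trans ha)⟩

/-- In a universal class (models of a universal theory), if two tuples have
the same Galois type over `M` (witnessed by embeddings into a common amalgam), then there
is an isomorphism between the generated substructures `cl^{N1}(a1 ∪ M)` and
`cl^{N2}(a2 ∪ M)` fixing `M` pointwise and sending `a1` to `a2`. -/
theorem stmt_4 {L : FirstOrder.Language} (T : L.Theory)
    (hT : ∀ ψ ∈ T, ∃ (n : ℕ) (φ : L.BoundedFormula Empty n), φ.IsQF ∧ ψ = φ.alls)
    {M N1 N2 P : Type*} [L.Structure M] [L.Structure N1] [L.Structure N2] [L.Structure P]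
    (hN1 : N1 ⊨ T) (hN2 : N2 ⊨ T)
    (i1 : M ↪[L] N1) (i2 : M ↪[L] N2) (a1 : N1) (a2 : N2)
    (g : N1 ↪[L] P) (h : N2 ↪[L] P)
    (hcomm : g.comp i1 = h.comp i2) (ha : g a1 = h a2) :
    ∃ f : (↥(Substructure.closure L (Set.range i1 ∪ {a1}))) ≃[L]
          (↥(Substructure.closure L (Set.range i2 ∪ {a2}))),
      (∀ m : M,
        (f ⟨i1 m, Substructure.subset_closure (Or.inl ⟨m, rfl⟩)⟩ : N2) = i2 m) ∧
      ((f ⟨a1, Substructure.subset_closure (Or.inr rfl)⟩ : N2) = a2) :=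
  stmt_4_general i1 i2 a1 a2 g h hcomm ha
end

section
/- Weak amalgamation from intersections: suppose K admits intersections and gtp(a1/M; N1) = gtp(a2/M; N2). Then there exist N1' ≤ N1 containing a1 and M, a structure N ≥ N1', and an embedding f : N2 → N fixing M with f(a2) = a1. -/
open FirstOrder Language

/-- Weak amalgamation from intersections: in the class of models of a
universal theory, if `gtp(a1/M; N1) = gtp(a2/M; N2)` (witnessed by embeddings into a
common amalgam), then there is a substructure `N1' ≤ N1` containing `a1` and (the image
of) `M`, a structure `N ≥ N1'`, and an embedding `f : N2 → N` fixing `M` with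
`f(a2) = a1` (i.e. `f a2` equals the image of `a1`). -/
theorem stmt_5 {L : FirstOrder.Language} (T : L.Theory)
    (hT : ∀ ψ ∈ T, ∃ (n : ℕ) (φ : L.BoundedFormula Empty n), φ.IsQF ∧ ψ = φ.alls)
    {M N1 N2 P : Type w} [L.Structure M] [L.Structure N1] [L.Structure N2] [L.Structure P]
    (hN1 : N1 ⊨ T) (hN2 : N2 ⊨ T)
    (i1 : M ↪[L] N1) (i2 : M ↪[L] N2) (a1 : N1) (a2 : N2)
    (g : N1 ↪[L] P) (h : N2 ↪[L] P)
    (hcomm : g.comp i1 = h.comp i2) (ha : g a1 = h a2) :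
    ∃ (N1' : L.Substructure N1) (ha1 : a1 ∈ N1') (hM : ∀ m : M, i1 m ∈ N1')
      (N : Type w) (_ : L.Structure N) (_ : N ⊨ T)
      (j : (↥N1') ↪[L] N) (f : N2 ↪[L] N),
      (∀ m : M, f (i2 m) = j ⟨i1 m, hM m⟩) ∧ f a2 = j ⟨a1, ha1⟩ := by
  have hc : ∀ m : M, g (i1 m) = h (i2 m) := fun m => DFunLike.congr_fun hcomm m
  have key : ∀ (p : P) (hp : p ∈ h.toHom.range), h (h.equivRange.symm ⟨p, hp⟩) = p := by
    rintro p ⟨y, rfl⟩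
    have : (⟨h.toHom y, ⟨y, rfl⟩⟩ : h.toHom.range) = h.equivRange y :=
      Subtype.ext (h.equivRange_apply y).symm
    rw [this, Language.Equiv.symm_apply_apply]; rfl
  refine ⟨(h.toHom.range).comap g.toHom, ⟨a2, ha.symm⟩, fun m => ⟨i2 m, (hc m).symm⟩,
    N2, inferInstance, hN2,
    h.equivRange.symm.toEmbedding.comp
      (Language.Embedding.codRestrict h.toHom.range
        (g.comp (Substructure.subtype _)) (fun c => c.2)),
    Embedding.refl L N2, ?_, ?_⟩
  · intro m
    apply h.injective
    exact (hc m).symm.trans (key _ _).symm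
  · apply h.injective
    exact ha.symm.trans (key _ _).symm
end

section
/- Universal classes are (<ω)-tame: if two Galois types over a model M in a universal class differ, then they differ over some finitely generated substructure of M. Concretely, if there is no isomorphism f : cl^{N1}(a1 M) → cl^{N2}(a2 M) fixing M with f(a1)=a2, then there is a finite subset A ⊆ M such that there is no isomorphism cl^{N1}(a1 A) → cl^{N2}(a2 A) fixing A and sending a1 to a2. -/
open FirstOrder Language

set_option maxHeartbeats 1000000 in
/-- Universal classes are `(<ω)`-tame: if there is no isomorphism
`f : cl^{N1}(a1 M) → cl^{N2}(a2 M)` fixing `M` with `f(a1) = a2`, then there is a finite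
subset `A ⊆ M` such that there is no isomorphism `cl^{N1}(a1 A) → cl^{N2}(a2 A)`
fixing `A` and sending `a1` to `a2`. -/
theorem stmt_6 {L : FirstOrder.Language} (T : L.Theory)
    (hT : ∀ ψ ∈ T, ∃ (n : ℕ) (φ : L.BoundedFormula Empty n), φ.IsQF ∧ ψ = φ.alls)
    {M N1 N2 : Type*} [L.Structure M] [L.Structure N1] [L.Structure N2]
    (hN1 : N1 ⊨ T) (hN2 : N2 ⊨ T)
    (i1 : M ↪[L] N1) (i2 : M ↪[L] N2) (a1 : N1) (a2 : N2)
    (hno : ¬ ∃ f : (↥(Substructure.closure L (Set.range i1 ∪ {a1}))) ≃[L]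
          (↥(Substructure.closure L (Set.range i2 ∪ {a2}))),
      (∀ m : M,
        (f ⟨i1 m, Substructure.subset_closure (Or.inl ⟨m, rfl⟩)⟩ : N2) = i2 m) ∧
      ((f ⟨a1, Substructure.subset_closure (Or.inr rfl)⟩ : N2) = a2)) :
    ∃ A : Finset M,
      ¬ ∃ f : (↥(Substructure.closure L (i1 '' (A : Set M) ∪ {a1}))) ≃[L]
          (↥(Substructure.closure L (i2 '' (A : Set M) ∪ {a2}))),
      (∀ (m : M) (hm : m ∈ A),
        (f ⟨i1 m, Substructure.subset_closure (Or.inl ⟨m, hm, rfl⟩)⟩ : N2) = i2 m) ∧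
      ((f ⟨a1, Substructure.subset_closure (Or.inr rfl)⟩ : N2) = a2) := by
  classical
  by_contra hcon
  push_neg at hcon
  choose F hFm hFa using hcon
  -- notation
  set C1 : L.Substructure N1 := Substructure.closure L (Set.range i1 ∪ {a1}) with hC1
  set C2 : L.Substructure N2 := Substructure.closure L (Set.range i2 ∪ {a2}) with hC2
  -- monotonicity of generated substructures
  have hsub1 : ∀ {A B : Finset M}, A ⊆ B →
      (i1 '' (A : Set M) ∪ {a1}) ⊆ (i1 '' (B : Set M) ∪ {a1}) := fun hAB =>
    Set.union_subset_union_left _ (Set.image_mono (Finset.coe_subset.2 hAB))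
  have hmono1 : ∀ {A B : Finset M}, A ⊆ B →
      Substructure.closure L (i1 '' (A : Set M) ∪ {a1}) ≤
        Substructure.closure L (i1 '' (B : Set M) ∪ {a1}) := fun hAB =>
    Substructure.closure_mono (hsub1 hAB)
  -- if a1 happens to equal some i1 m, then a2 = i2 m is forced
  have forced : ∀ m : M, i1 m = a1 → i2 m = a2 := by
    intro m hm
    have h1 := hFm {m} m (Finset.mem_singleton_self m)
    have h2 := hFa {m}
    exact h1.symm.trans
      ((congrArg (fun z => ((F {m} z : _) : N2)) (Subtype.ext hm)).trans h2)
  -- the canonical map on generators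
  set w : N1 → N2 := fun u => if h : ∃ m, i1 m = u then i2 h.choose else a2 with hw
  have hw1 : ∀ m : M, w (i1 m) = i2 m := by
    intro m
    have hex : ∃ m', i1 m' = i1 m := ⟨m, rfl⟩
    simp only [hw, dif_pos hex]
    exact congrArg i2 (i1.injective hex.choose_spec)
  have hw2 : w a1 = a2 := by
    by_cases h : ∃ m, i1 m = a1
    · simp only [hw, dif_pos h]
      exact forced _ h.choose_spec
    · simp only [hw, dif_neg h]
  -- core computation: F A evaluated at a term in the generators
  have hcore : ∀ (A : Finset M) (t : L.Term ↥(i1 '' (A : Set M) ∪ {a1})) (x : N1)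
      (hx : x ∈ Substructure.closure L (i1 '' (A : Set M) ∪ {a1})),
      t.realize (Subtype.val) = x →
      ((F A ⟨x, hx⟩ : _) : N2) = t.realize (fun u => w u.1) := by
    intro A t x hx ht
    set S := Substructure.closure L (i1 '' (A : Set M) ∪ {a1}) with hS
    set v : ↥(i1 '' (A : Set M) ∪ {a1}) → ↥S :=
      fun u => ⟨u.1, Substructure.subset_closure u.2⟩ with hv
    have h1 : (⟨x, hx⟩ : ↥S) = t.realize v := by
      apply Subtype.val_injective
      calc x = t.realize (Subtype.val) := ht.symm
        _ = t.realize (S.subtype ∘ v) := rfl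
        _ = S.subtype (t.realize v) := HomClass.realize_term _
        _ = ↑(t.realize v) := rfl
    rw [h1]
    calc ((F A (t.realize v) : _) : N2)
        = (Substructure.closure L (i2 '' (A : Set M) ∪ {a2})).subtype
            ((F A) (t.realize v)) := rfl
      _ = (Substructure.closure L (i2 '' (A : Set M) ∪ {a2})).subtype
            (t.realize ((F A) ∘ v)) := by rw [HomClass.realize_term]
      _ = t.realize ((Substructure.closure L (i2 '' (A : Set M) ∪ {a2})).subtype ∘
            ((F A) ∘ v)) := (HomClass.realize_term _).symm
      _ = t.realize (fun u => w u.1) := by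
          refine congrArg t.realize (funext fun u => ?_)
          rcases u.2 with hu | hu
          · obtain ⟨m, hmA, hm⟩ := hu
            have : (v u) = ⟨i1 m, Substructure.subset_closure (Or.inl ⟨m, hmA, rfl⟩)⟩ :=
              Subtype.ext hm.symm
            calc ((F A) (v u) : N2)
                = ((F A) ⟨i1 m, Substructure.subset_closure (Or.inl ⟨m, hmA, rfl⟩)⟩ : N2) := by
                  rw [this]
              _ = i2 m := hFm A m hmA
              _ = w (i1 m) := (hw1 m).symm
              _ = w u.1 := by rw [hm]
          · have hu' : u.1 = a1 := hu
            have : (v u) = ⟨a1, Substructure.subset_closure (Or.inr rfl)⟩ :=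
              Subtype.ext hu'
            calc ((F A) (v u) : N2)
                = ((F A) ⟨a1, Substructure.subset_closure (Or.inr rfl)⟩ : N2) := by rw [this]
              _ = a2 := hFa A
              _ = w a1 := hw2.symm
              _ = w u.1 := by rw [hu']
  -- compatibility of the F A's
  have hcomp : ∀ (A B : Finset M) (hAB : A ⊆ B) (x : N1)
      (hxA : x ∈ Substructure.closure L (i1 '' (A : Set M) ∪ {a1}))
      (hxB : x ∈ Substructure.closure L (i1 '' (B : Set M) ∪ {a1})),
      ((F A ⟨x, hxA⟩ : _) : N2) = ((F B ⟨x, hxB⟩ : _) : N2) := by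
    intro A B hAB x hxA hxB
    obtain ⟨t, ht⟩ := Substructure.mem_closure_iff_exists_term.1 hxA
    have hts : (t.relabel (Set.inclusion (hsub1 hAB))).realize (Subtype.val) = x := by
      rw [Term.realize_relabel]
      exact ht
    rw [hcore A t x hxA ht, hcore B (t.relabel (Set.inclusion (hsub1 hAB))) x hxB hts,
      Term.realize_relabel]
    rfl
  have hcomp' : ∀ (A B : Finset M) (x : N1)
      (hxA : x ∈ Substructure.closure L (i1 '' (A : Set M) ∪ {a1}))
      (hxB : x ∈ Substructure.closure L (i1 '' (B : Set M) ∪ {a1})),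
      ((F A ⟨x, hxA⟩ : _) : N2) = ((F B ⟨x, hxB⟩ : _) : N2) := by
    intro A B x hxA hxB
    rw [hcomp A (A ∪ B) Finset.subset_union_left x hxA
      (hmono1 Finset.subset_union_left hxA),
      hcomp B (A ∪ B) Finset.subset_union_right x hxB
      (hmono1 Finset.subset_union_right hxB)]
  -- every element of the big closures lies in a finitely generated one
  have hfin1 : ∀ x ∈ C1, ∃ A : Finset M,
      x ∈ Substructure.closure L (i1 '' (A : Set M) ∪ {a1}) := by
    intro x hx
    refine Substructure.closure_induction
      (p := fun x => ∃ A : Finset M,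
        x ∈ Substructure.closure L (i1 '' (A : Set M) ∪ {a1}))
      hx (fun y hy => ?_) (fun {n} f xs hxs => ?_)
    · rcases hy with ⟨m, rfl⟩ | hy
      · exact ⟨{m}, Substructure.subset_closure (Or.inl ⟨m, by simp, rfl⟩)⟩
      · exact ⟨∅, Substructure.subset_closure (Or.inr hy)⟩
    · choose g hg using hxs
      refine ⟨Finset.univ.sup g, Substructure.fun_mem _ f _ fun i => ?_⟩
      exact hmono1 (Finset.le_sup (Finset.mem_univ i)) (hg i)
  have hfin2 : ∀ y ∈ C2, ∃ A : Finset M,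
      y ∈ Substructure.closure L (i2 '' (A : Set M) ∪ {a2}) := by
    intro y hy
    refine Substructure.closure_induction
      (p := fun y => ∃ A : Finset M,
        y ∈ Substructure.closure L (i2 '' (A : Set M) ∪ {a2}))
      hy (fun z hz => ?_) (fun {n} f xs hxs => ?_)
    · rcases hz with ⟨m, rfl⟩ | hz
      · exact ⟨{m}, Substructure.subset_closure (Or.inl ⟨m, by simp, rfl⟩)⟩
      · exact ⟨∅, Substructure.subset_closure (Or.inr hz)⟩
    · choose g hg using hxs
      refine ⟨Finset.univ.sup g, Substructure.fun_mem _ f _ fun i => ?_⟩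
      exact Substructure.closure_mono
        (Set.union_subset_union_left _
          (Set.image_mono (Finset.coe_subset.2 (Finset.le_sup (Finset.mem_univ i)))))
        (hg i)
  -- the global map
  choose AA hAA using hfin1
  set g : ↥C1 → N2 := fun x => ((F (AA x.1 x.2) ⟨x.1, hAA x.1 x.2⟩ : _) : N2) with hgdef
  have hg : ∀ (x : ↥C1) (A : Finset M)
      (hxA : x.1 ∈ Substructure.closure L (i1 '' (A : Set M) ∪ {a1})),
      g x = ((F A ⟨x.1, hxA⟩ : _) : N2) := fun x A hxA =>
    hcomp' (AA x.1 x.2) A x.1 (hAA x.1 x.2) hxA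
  have hsub2 : ∀ A : Finset M, (i2 '' (A : Set M) ∪ {a2}) ⊆ (Set.range i2 ∪ {a2}) := fun A =>
    Set.union_subset_union_left _ (Set.image_subset_range i2 _)
  have hmem2 : ∀ A : Finset M,
      Substructure.closure L (i2 '' (A : Set M) ∪ {a2}) ≤ C2 := fun A =>
    Substructure.closure_mono (hsub2 A)
  have hgmem : ∀ x : ↥C1, g x ∈ C2 := fun x =>
    hmem2 (AA x.1 x.2) (F (AA x.1 x.2) ⟨x.1, hAA x.1 x.2⟩).2
  set G : ↥C1 → ↥C2 := fun x => ⟨g x, hgmem x⟩ with hGdef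
  have hGinj : Function.Injective G := by
    intro x y hxy
    have h := congrArg Subtype.val hxy
    simp only [hGdef] at h
    set A := AA x.1 x.2 ∪ AA y.1 y.2 with hA
    have hx : x.1 ∈ Substructure.closure L (i1 '' (A : Set M) ∪ {a1}) :=
      hmono1 Finset.subset_union_left (hAA x.1 x.2)
    have hy : y.1 ∈ Substructure.closure L (i1 '' (A : Set M) ∪ {a1}) :=
      hmono1 Finset.subset_union_right (hAA y.1 y.2)
    rw [hg x A hx, hg y A hy] at h
    have h2 := EquivLike.injective (F A) (Subtype.val_injective h)
    exact Subtype.ext (Subtype.mk_eq_mk.1 h2)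
  have hGsurj : Function.Surjective G := by
    intro y
    obtain ⟨A, hyA⟩ := hfin2 y.1 y.2
    obtain ⟨x, hx⟩ : ∃ x : ↥(Substructure.closure L (i1 '' (A : Set M) ∪ {a1})),
        F A x = ⟨y.1, hyA⟩ := ⟨(F A).symm _, (F A).apply_symm_apply _⟩
    have hx1 : x.1 ∈ C1 :=
      Substructure.closure_mono
        (Set.union_subset_union_left _ (Set.image_subset_range i1 _)) x.2
    refine ⟨⟨x.1, hx1⟩, Subtype.ext ?_⟩
    calc ((G ⟨x.1, hx1⟩ : ↥C2) : N2) = g ⟨x.1, hx1⟩ := rfl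
      _ = ((F A ⟨x.1, x.2⟩ : _) : N2) := hg ⟨x.1, hx1⟩ A x.2
      _ = ((F A x : _) : N2) := rfl
      _ = y.1 := by rw [hx]
  have hsup : ∀ {n : ℕ} (xs : Fin n → ↥C1) (i : Fin n),
      (xs i).1 ∈ Substructure.closure L
        (i1 '' ((Finset.univ.sup fun j => AA (xs j).1 (xs j).2 : Finset M) : Set M) ∪ {a1}) := by
    intro n xs i
    have hle := Finset.le_sup (f := fun j => AA (xs j).1 (xs j).2) (Finset.mem_univ i)
    exact hmono1 hle (hAA (xs i).1 (xs i).2)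
  have hGfun : ∀ {n : ℕ} (f : L.Functions n) (xs : Fin n → ↥C1),
      G (Structure.funMap f xs) = Structure.funMap f (G ∘ xs) := by
    intro n f xs
    apply Subtype.ext
    set A := (Finset.univ.sup fun j => AA (xs j).1 (xs j).2 : Finset M) with hA
    set ys : Fin n → ↥(Substructure.closure L (i1 '' (A : Set M) ∪ {a1})) :=
      fun i => ⟨(xs i).1, hsup xs i⟩ with hys
    have hmemf : (Structure.funMap f xs : ↥C1).1 ∈
        Substructure.closure L (i1 '' (A : Set M) ∪ {a1}) :=
      Substructure.fun_mem _ f _ fun i => hsup xs i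
    show g (Structure.funMap f xs) = (Structure.funMap f (G ∘ xs) : ↥C2).1
    rw [hg (Structure.funMap f xs) A hmemf]
    have e1 : (⟨(Structure.funMap f xs : ↥C1).1, hmemf⟩ : _) = Structure.funMap f ys := Subtype.ext rfl
    rw [e1]
    calc ((F A (Structure.funMap f ys) : _) : N2)
        = ((Structure.funMap f ((F A) ∘ ys) : _) : N2) := by rw [Equiv.map_fun]
      _ = Structure.funMap f (fun i => ((F A (ys i) : _) : N2)) := rfl
      _ = Structure.funMap f (fun i => g (xs i)) := by
          refine congrArg (Structure.funMap f) (funext fun i => ?_)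
          exact (hg (xs i) A (hsup xs i)).symm
      _ = (Structure.funMap f (G ∘ xs) : ↥C2).1 := rfl
  have hGrel : ∀ {n : ℕ} (r : L.Relations n) (xs : Fin n → ↥C1),
      Structure.RelMap r (G ∘ xs) ↔ Structure.RelMap r xs := by
    intro n r xs
    set A := (Finset.univ.sup fun j => AA (xs j).1 (xs j).2 : Finset M) with hA
    set ys : Fin n → ↥(Substructure.closure L (i1 '' (A : Set M) ∪ {a1})) :=
      fun i => ⟨(xs i).1, hsup xs i⟩ with hys
    have hfe : (fun i => ((G (xs i) : ↥C2) : N2)) = fun i => ((F A (ys i) : _) : N2) :=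
      funext fun i => hg (xs i) A (hsup xs i)
    have key := (F A).map_rel r ys
    have e1 : Structure.RelMap (M := ↥C2) r (G ∘ xs) =
        Structure.RelMap (M := N2) r fun i => ((G (xs i) : ↥C2) : N2) := rfl
    have e2 : Structure.RelMap r ((F A) ∘ ys) =
        Structure.RelMap (M := N2) r fun i => ((F A (ys i) : _) : N2) := rfl
    have e3 : Structure.RelMap r ys = Structure.RelMap (M := ↥C1) r xs := rfl
    rw [e1, hfe, ← e2, key]
    exact iff_of_eq e3
  refine hno ⟨⟨Equiv.ofBijective G ⟨hGinj, hGsurj⟩, fun {n} f xs => hGfun f xs,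
    fun {n} r xs => hGrel r xs⟩, ?_, ?_⟩
  · intro m
    have hxA : i1 m ∈ Substructure.closure L (i1 '' (({m} : Finset M) : Set M) ∪ {a1}) :=
      Substructure.subset_closure (Or.inl ⟨m, by simp, rfl⟩)
    have h1 : g ⟨i1 m, Substructure.subset_closure (Or.inl ⟨m, rfl⟩)⟩ = i2 m := by
      rw [hg _ {m} hxA]
      exact hFm {m} m (Finset.mem_singleton_self m)
    exact h1
  · have hx : a1 ∈ C1 := Substructure.subset_closure (Or.inr rfl)
    have hxA : a1 ∈ Substructure.closure L
        (i1 '' ((AA a1 hx : Finset M) : Set M) ∪ {a1}) :=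
      Substructure.subset_closure (Or.inr rfl)
    have h1 : g ⟨a1, Substructure.subset_closure (Or.inr rfl)⟩ = a2 := by
      rw [hg _ (AA a1 hx) hxA]
      exact hFa (AA a1 hx)
    exact h1
end
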